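/- Let R be an algebraic curvature tensor on ℝⁿ whose sectional curvatures all lie in an interval [K_min, K_max]. Then for all orthonormal vectors x, y, z, w one has |R(x,y,z,w)| ≤ (2/3)(K_max - K_min) (Berger's inequality). -/

import Mathlib

/-!
Polarizing the biquadratic form (u, v) ↦ R(u, v, u, v) over the eight planes spanned by
x ± z, y ± w and by x ± w, y ± z, the symmetries of R and the Bianchi identity give
  24 R(x, y, z, w) = ∑ₛ,ₜ s t (R(x + s z, y + t w, x + s z, y + t w)
                                 - R(x + s w, y + t z, x + s w, y + t z)),   s, t = ±1. The spanning pairs are orthogonal with squared lengths 2, so each bracket is a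
difference of two values in [4 K_min, 4 K_max]; hence 24 |R(x, y, z, w)| ≤ 16 (K_max - K_min).
-/

open Finset

section Polarization

variable {V : Type*} [AddCommGroup V] [Module ℝ V]

structure IsAlgebraicCurvatureTensor (R : V →ₗ[ℝ] V →ₗ[ℝ] V →ₗ[ℝ] V →ₗ[ℝ] ℝ) : Prop where
  antisymm : ∀ x y z w, R x y z w = - R y x z w
  pair_symm : ∀ x y z w, R x y z w = R z w x y
  bianchi : ∀ x y z w, R x y z w + R y z x w + R z x y w = 0

theorem IsAlgebraicCurvatureTensor.polarization {R : V →ₗ[ℝ] V →ₗ[ℝ] V →ₗ[ℝ] V →ₗ[ℝ] ℝ}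
    (hR : IsAlgebraicCurvatureTensor R) (x y z w : V) :
    24 * R x y z w = ∑ s ∈ {1, -1}, ∑ t ∈ {1, -1}, s * t *
      (R (x + s • z) (y + t • w) (x + s • z) (y + t • w) -
        R (x + s • w) (y + t • z) (x + s • w) (y + t • z)) := by
  simp only [sum_pair (by norm_num : (1 : ℝ) ≠ -1), map_add, map_smul,
    LinearMap.add_apply, LinearMap.smul_apply, smul_eq_mul]
  linarith [hR.pair_symm z w x y, hR.pair_symm x w z y, hR.antisymm w z x y, hR.pair_symm x y w z,
      hR.antisymm y z x w, hR.bianchi x y z w, hR.antisymm x z w y, hR.pair_symm z x w y,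
      hR.pair_symm x z w y, hR.antisymm w y z x, hR.pair_symm y w z x]

end Polarization

section Sectional

variable {E : Type*} [NormedAddCommGroup E] [InnerProductSpace ℝ E]

def SectionalCurvatureBetween (R : E →ₗ[ℝ] E →ₗ[ℝ] E →ₗ[ℝ] E →ₗ[ℝ] ℝ) (Kmin Kmax : ℝ) : Prop :=
  ∀ x y : E, (inner ℝ x x : ℝ) = 1 → (inner ℝ y y : ℝ) = 1 → (inner ℝ x y : ℝ) = 0 →
    Kmin ≤ R x y x y ∧ R x y x y ≤ Kmax

variable {R : E →ₗ[ℝ] E →ₗ[ℝ] E →ₗ[ℝ] E →ₗ[ℝ] ℝ} {Kmin Kmax : ℝ}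

theorem SectionalCurvatureBetween.mem_Icc_of_inner_eq_zero
    (hK : SectionalCurvatureBetween R Kmin Kmax) {u v : E} (huv : inner ℝ u v = (0 : ℝ)) :
    R u v u v ∈ Set.Icc (Kmin * (‖u‖ ^ 2 * ‖v‖ ^ 2)) (Kmax * (‖u‖ ^ 2 * ‖v‖ ^ 2)) := by
  rcases eq_or_ne u 0 with rfl | hu
  · simp
  rcases eq_or_ne v 0 with rfl | hv
  · simp
  have hu' : ‖u‖ ≠ 0 := norm_ne_zero_iff.mpr hu
  have hv' : ‖v‖ ≠ 0 := norm_ne_zero_iff.mpr hv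
  have hunit {a : E} (ha : ‖a‖ ≠ 0) : inner ℝ (‖a‖⁻¹ • a) (‖a‖⁻¹ • a) = (1 : ℝ) := by
    rw [real_inner_smul_left, real_inner_smul_right, real_inner_self_eq_norm_sq]
    field_simp
  obtain ⟨hlow, hupp⟩ := hK (‖u‖⁻¹ • u) (‖v‖⁻¹ • v) (hunit hu') (hunit hv')
    (by rw [real_inner_smul_left, real_inner_smul_right, huv, mul_zero, mul_zero])
  have hscale : R (‖u‖⁻¹ • u) (‖v‖⁻¹ • v) (‖u‖⁻¹ • u) (‖v‖⁻¹ • v) =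
      R u v u v / (‖u‖ ^ 2 * ‖v‖ ^ 2) := by
    simp only [map_smul, LinearMap.smul_apply, smul_eq_mul]
    field_simp
  rw [hscale] at hlow hupp
  have hpos : 0 < ‖u‖ ^ 2 * ‖v‖ ^ 2 := by positivity
  exact ⟨(le_div_iff₀ hpos).mp hlow, (div_le_iff₀ hpos).mp hupp⟩

theorem Orthonormal.norm_add_smul_sq {ι : Type*} {e : ι → E} (he : Orthonormal ℝ e) {i j : ι}
    (hij : i ≠ j) (s : ℝ) : ‖e i + s • e j‖ ^ 2 = 1 + s ^ 2 := by
  rw [norm_add_sq_real, real_inner_smul_right, he.2 hij, norm_smul, he.1 i, he.1 j,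
    Real.norm_eq_abs, mul_one, sq_abs]
  ring

theorem Orthonormal.inner_add_smul_add_smul {ι : Type*} {e : ι → E} (he : Orthonormal ℝ e)
    {i j k l : ι} (hij : i ≠ j) (hil : i ≠ l) (hkj : k ≠ j) (hkl : k ≠ l) (s t : ℝ) :
    inner ℝ (e i + s • e k) (e j + t • e l) = (0 : ℝ) := by
  simp only [inner_add_left, inner_add_right, real_inner_smul_left, real_inner_smul_right,
    he.2 hij, he.2 hil, he.2 hkj, he.2 hkl, mul_zero, add_zero]

theorem SectionalCurvatureBetween.abs_sub_le_of_orthonormal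
    (hK : SectionalCurvatureBetween R Kmin Kmax) {ι : Type*} {e : ι → E} (he : Orthonormal ℝ e)
    {i j k l : ι} (hij : i ≠ j) (hik : i ≠ k) (hil : i ≠ l) (hjk : j ≠ k) (hjl : j ≠ l)
    (hkl : k ≠ l) {s t : ℝ} (hs : s ^ 2 = 1) (ht : t ^ 2 = 1) :
    |R (e i + s • e k) (e j + t • e l) (e i + s • e k) (e j + t • e l) -
      R (e i + s • e l) (e j + t • e k) (e i + s • e l) (e j + t • e k)| ≤ 4 * (Kmax - Kmin) := by
  obtain ⟨h₁, h₁'⟩ := hK.mem_Icc_of_inner_eq_zero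
    (he.inner_add_smul_add_smul hij hil hjk.symm hkl s t)
  obtain ⟨h₂, h₂'⟩ := hK.mem_Icc_of_inner_eq_zero
    (he.inner_add_smul_add_smul hij hik hjl.symm hkl.symm s t)
  rw [he.norm_add_smul_sq hik, he.norm_add_smul_sq hjl, hs, ht] at h₁ h₁'
  rw [he.norm_add_smul_sq hil, he.norm_add_smul_sq hjk, hs, ht] at h₂ h₂'
  rw [abs_sub_le_iff]
  constructor <;> linarith

end Sectional

theorem stmt_2 (n : ℕ)
    (R : EuclideanSpace ℝ (Fin n) →ₗ[ℝ] EuclideanSpace ℝ (Fin n) →ₗ[ℝ]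
      EuclideanSpace ℝ (Fin n) →ₗ[ℝ] EuclideanSpace ℝ (Fin n) →ₗ[ℝ] ℝ)
    (Kmin Kmax : ℝ)
    (hanti : ∀ x y z w, R x y z w = - R y x z w)
    (hpair : ∀ x y z w, R x y z w = R z w x y)
    (hbianchi : ∀ x y z w, R x y z w + R y z x w + R z x y w = 0)
    (hsec : ∀ x y : EuclideanSpace ℝ (Fin n),
      (inner ℝ x x : ℝ) = 1 → (inner ℝ y y : ℝ) = 1 → (inner ℝ x y : ℝ) = 0 →
      Kmin ≤ R x y x y ∧ R x y x y ≤ Kmax) :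
    ∀ e : Fin 4 → EuclideanSpace ℝ (Fin n), Orthonormal ℝ e →
      |R (e 0) (e 1) (e 2) (e 3)| ≤ (2/3) * (Kmax - Kmin) := by
  intro e he
  have hK : SectionalCurvatureBetween R Kmin Kmax := hsec
  have hsign {r : ℝ} (hr : r ∈ ({1, -1} : Finset ℝ)) : r ^ 2 = 1 ∧ |r| = 1 := by
    rcases mem_insert.mp hr with rfl | hr
    · norm_num
    · rw [mem_singleton.mp hr]; norm_num
  have h24 : 24 * |R (e 0) (e 1) (e 2) (e 3)| ≤ 16 * (Kmax - Kmin) := calc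
    _ = |∑ s ∈ ({1, -1} : Finset ℝ), ∑ t ∈ ({1, -1} : Finset ℝ), s * t *
          (R (e 0 + s • e 2) (e 1 + t • e 3) (e 0 + s • e 2) (e 1 + t • e 3) -
            R (e 0 + s • e 3) (e 1 + t • e 2) (e 0 + s • e 3) (e 1 + t • e 2))| := by
      rw [← (IsAlgebraicCurvatureTensor.mk hanti hpair hbianchi).polarization, abs_mul,
        abs_of_pos (by norm_num : (0 : ℝ) < 24)]
    _ ≤ ∑ s ∈ ({1, -1} : Finset ℝ), ∑ t ∈ ({1, -1} : Finset ℝ), 4 * (Kmax - Kmin) := by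
      refine (abs_sum_le_sum_abs _ _).trans (sum_le_sum fun s hs => ?_)
      refine (abs_sum_le_sum_abs _ _).trans (sum_le_sum fun t ht => ?_)
      rw [abs_mul, abs_mul, (hsign hs).2, (hsign ht).2, one_mul, one_mul]
      exact hK.abs_sub_le_of_orthonormal he (by decide) (by decide) (by decide) (by decide)
        (by decide) (by decide) (hsign hs).1 (hsign ht).1
    _ = 16 * (Kmax - Kmin) := by
      rw [sum_pair (by norm_num : (1 : ℝ) ≠ -1), sum_pair (by norm_num : (1 : ℝ) ≠ -1)]
      ring
  linarith
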